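/- Let 1 ≤ i < n and assume that the ideal (f_i, f_{i+1}) of S equals the maximal ideal m. Then the R-linear map a : S_{i+1} ⊕ S_{i−1} → S_i, a(s,t) = −π(s) + f_i·t, is right almost split in add(⊕_{j=1}^n S_j): every R-linear map h : S_j → S_i (for any 1 ≤ j ≤ n) that is not a split epimorphism factors through a. -/

import Mathlib

set_option synthInstance.maxHeartbeats 1000000
set_option maxHeartbeats 1000000

/-- `S = k[[x,y]]`, the formal power series ring in two variables. -/
abbrev PSring (k : Type) [Field k] : Type := MvPowerSeries (Fin 2) k

/-- The maximal ideal `m = (x, y)` of `k[[x,y]]`. -/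
noncomputable abbrev mxy (k : Type) [Field k] : Ideal (PSring k) :=
  Ideal.span {MvPowerSeries.X 0, MvPowerSeries.X 1}

/-- `R = S/(f₁ ⋯ f_n)`. -/
abbrev Rring (k : Type) [Field k] (n : ℕ) (f : ℕ → PSring k) : Type :=
  PSring k ⧸ Ideal.span {∏ j ∈ Finset.range n, f j}

/-- The canonical projection `S → R`. -/
noncomputable abbrev toR (k : Type) [Field k] (n : ℕ) (f : ℕ → PSring k) :
    PSring k →+* Rring k n f :=
  Ideal.Quotient.mk (Ideal.span {∏ j ∈ Finset.range n, f j})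

/-- For `a ∈ S`, the `R`-module `R/(ā)`, which is `S/(a)` when `f₁⋯f_n ∈ (a)`. -/
abbrev Qmod (k : Type) [Field k] (n : ℕ) (f : ℕ → PSring k) (a : PSring k) : Type :=
  Rring k n f ⧸ Ideal.span {toR k n f a}

/-- The class in `S/(a)` of an element `r : R`. -/
noncomputable abbrev qmk (k : Type) [Field k] (n : ℕ) (f : ℕ → PSring k)
    (a : PSring k) (r : Rring k n f) : Qmod k n f a :=
  Ideal.Quotient.mk (Ideal.span {toR k n f a}) r

/-- `Sᵢ = S/(f₁ ⋯ fᵢ)` as an `R`-module (1-based index `i`;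
in the 0-based function `f`, the mathematical `fᵢ` is `f (i-1)`). -/
abbrev Smod (k : Type) [Field k] (n : ℕ) (f : ℕ → PSring k) (i : ℕ) : Type :=
  Qmod k n f (∏ j ∈ Finset.range i, f j)

/-!
Every `R`-linear map `h : Sⱼ → Sᵢ` is multiplication by some `g ∈ S` with `f₁⋯fᵢ ∣ f₁⋯fⱼ g`, and
`a` maps `(c₁ x, c₂ x)` to `(fᵢ c₂ - c₁) x`, so it suffices to write `g ≡ fᵢ c₂ - c₁` modulo
`f₁⋯fᵢ` with `c₁ Sⱼ ⊆ (f₁⋯fᵢ₊₁)` and `c₂ Sⱼ ⊆ (f₁⋯fᵢ₋₁)`. For `j > i` take `c₁ = -g`; for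
`j < i` cancel `f₁⋯fⱼ` and take `c₁ = 0`. For `j = i`, `g` is not a unit because `h` is not a
split epimorphism, so `g ∈ m = (fᵢ, fᵢ₊₁)`, say `g = α fᵢ + β fᵢ₊₁`, and `c₁ = -β fᵢ₊₁`, `c₂ = α`.
-/

open Ideal Finset

section QuotientMaps

variable {R : Type*} [CommRing R]

noncomputable def mulQ (a b c : R) (hd : b ∣ c * a) : (R ⧸ span {a}) →ₗ[R] R ⧸ span {b} :=
  Submodule.mapQ _ _ (c • LinearMap.id) <| by
    rw [span, Submodule.span_singleton_le_iff_mem, Submodule.mem_comap]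
    exact mem_span_singleton.mpr hd

@[simp]
lemma mulQ_mk (a b c : R) (hd : b ∣ c * a) (r : R) :
    mulQ a b c hd (Ideal.Quotient.mk _ r) = Ideal.Quotient.mk _ (c * r) := rfl

lemma LinearMap.exists_map_mk_eq_mk_mul {a b : R} (h : (R ⧸ span {a}) →ₗ[R] R ⧸ span {b}) :
    ∃ g : R, ∀ r, h (Ideal.Quotient.mk _ r) = Ideal.Quotient.mk _ (r * g) := by
  obtain ⟨g, hg⟩ := Ideal.Quotient.mk_surjective (h (Ideal.Quotient.mk _ 1))
  refine ⟨g, fun r => ?_⟩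
  have : (Ideal.Quotient.mk (span {a}) r) = r • Ideal.Quotient.mk _ 1 := by
    simp [Algebra.smul_def]
  rw [this, map_smul, ← hg]
  rfl

lemma dvd_mul_of_map_mk_eq_mk_mul {a b g : R} {h : (R ⧸ span {a}) →ₗ[R] R ⧸ span {b}}
    (hg : ∀ r, h (Ideal.Quotient.mk _ r) = Ideal.Quotient.mk _ (r * g)) : b ∣ a * g := by
  rw [← mem_span_singleton, ← Ideal.Quotient.eq_zero_iff_mem, ← hg,
    Ideal.Quotient.eq_zero_iff_mem.mpr (mem_span_singleton_self a), map_zero]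

lemma exists_comp_eq_id_of_isUnit {a g : R} {h : (R ⧸ span {a}) →ₗ[R] R ⧸ span {a}}
    (hg : ∀ r, h (Ideal.Quotient.mk _ r) = Ideal.Quotient.mk _ (r * g)) (hu : IsUnit g) :
    ∃ σ : (R ⧸ span {a}) →ₗ[R] R ⧸ span {a}, h ∘ₗ σ = LinearMap.id := by
  obtain ⟨u, rfl⟩ := hu
  refine ⟨mulQ a a ↑u⁻¹ (dvd_mul_left a _), LinearMap.ext fun x => ?_⟩
  obtain ⟨r, rfl⟩ := Ideal.Quotient.mk_surjective x
  rw [LinearMap.comp_apply, mulQ_mk, hg, mul_right_comm, Units.inv_mul, one_mul,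
    LinearMap.id_apply]

lemma exists_comp_eq_of_dvd {p q q₁ q₂ u g c₁ c₂ : R}
    (a : (R ⧸ span {q₁}) × (R ⧸ span {q₂}) →ₗ[R] R ⧸ span {q})
    (ha : ∀ r r', a (Ideal.Quotient.mk _ r, Ideal.Quotient.mk _ r') =
      -Ideal.Quotient.mk _ r + Ideal.Quotient.mk _ (u * r'))
    {h : (R ⧸ span {p}) →ₗ[R] R ⧸ span {q}}
    (hg : ∀ r, h (Ideal.Quotient.mk _ r) = Ideal.Quotient.mk _ (r * g))
    (h₁ : q₁ ∣ c₁ * p) (h₂ : q₂ ∣ c₂ * p) (hq : q ∣ u * c₂ - c₁ - g) :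
    ∃ φ : (R ⧸ span {p}) →ₗ[R] (R ⧸ span {q₁}) × (R ⧸ span {q₂}),
      a ∘ₗ φ = h := by
  refine ⟨(mulQ p q₁ c₁ h₁).prod (mulQ p q₂ c₂ h₂), LinearMap.ext fun x => ?_⟩
  obtain ⟨r, rfl⟩ := Ideal.Quotient.mk_surjective x
  rw [LinearMap.comp_apply, LinearMap.prod_apply, Function.prod, mulQ_mk, mulQ_mk, ha, hg,
    ← map_neg, ← map_add, Ideal.Quotient.eq, mem_span_singleton]
  convert hq.mul_right r using 1
  ring

lemma dvd_of_mk_dvd_mk {p b x : R} (hb : b ∣ p)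
    (h : Ideal.Quotient.mk (span {p}) b ∣ Ideal.Quotient.mk (span {p}) x) : b ∣ x := by
  obtain ⟨d, hd⟩ := h
  obtain ⟨e, rfl⟩ := Ideal.Quotient.mk_surjective d
  rw [← map_mul, Ideal.Quotient.eq, mem_span_singleton] at hd
  simpa using dvd_add (hb.trans hd) (dvd_mul_right b e)

end QuotientMaps

section Products

variable {A : Type*} [CommRing A] (f : ℕ → A)

/-- With the paper's `i = m + 1` (so `f m` is `fᵢ`): multiplication by `g : Sⱼ → Sᵢ` factors
through `a` via `x ↦ (c₁ x, c₂ x)`. -/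
def MulFactorsThrough (m j : ℕ) (g : A) : Prop :=
  ∃ c₁ c₂ : A, (∏ l ∈ range (m + 1 + 1), f l) ∣ c₁ * ∏ l ∈ range j, f l ∧
    (∏ l ∈ range m, f l) ∣ c₂ * ∏ l ∈ range j, f l ∧
    (∏ l ∈ range (m + 1), f l) ∣ f m * c₂ - c₁ - g

variable {f}

lemma mulFactorsThrough_of_le [NoZeroDivisors A] {m j : ℕ} {g : A} (hj : j ≤ m)
    (hf : ∏ l ∈ range j, f l ≠ 0)
    (hg : ∏ l ∈ range (m + 1), f l ∣ (∏ l ∈ range j, f l) * g) :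
    MulFactorsThrough f m j g := by
  obtain ⟨t, ht⟩ := hg
  have hsplit : ∏ l ∈ range (m + 1), f l =
      (∏ l ∈ range j, f l) * ((∏ l ∈ Ico j m, f l) * f m) := by
    rw [prod_range_succ, ← prod_range_mul_prod_Ico f hj, mul_assoc]
  rw [hsplit, mul_assoc] at ht
  have hgt := mul_left_cancel₀ hf ht
  refine ⟨0, (∏ l ∈ Ico j m, f l) * t, by simp, ⟨t, ?_⟩, ⟨0, ?_⟩⟩
  · rw [← prod_range_mul_prod_Ico f hj]; ring
  · rw [hgt]; ring

lemma mulFactorsThrough_of_lt {m j : ℕ} (g : A) (hj : m + 1 < j) :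
    MulFactorsThrough f m j g :=
  ⟨-g, 0, dvd_mul_of_dvd_right (prod_dvd_prod_of_subset _ _ f (range_mono hj)) _,
    by simp, by simp⟩

lemma mulFactorsThrough_of_mem_span_pair {m : ℕ} {g : A} (hg : g ∈ span {f m, f (m + 1)}) :
    MulFactorsThrough f m (m + 1) g := by
  obtain ⟨α, β, rfl⟩ := mem_span_pair.mp hg
  refine ⟨-(β * f (m + 1)), α, ⟨-β, ?_⟩, ⟨f m * α, ?_⟩, ⟨0, ?_⟩⟩ <;>
    simp only [prod_range_succ] <;> ring

lemma exists_comp_eq_of_mulFactorsThrough {R : Type*} [CommRing R] (φ : A →+* R) {m j : ℕ}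
    {g : A} (hfg : MulFactorsThrough f m j g)
    (a : (R ⧸ span {φ (∏ l ∈ range (m + 1 + 1), f l)}) × (R ⧸ span {φ (∏ l ∈ range m, f l)})
      →ₗ[R] R ⧸ span {φ (∏ l ∈ range (m + 1), f l)})
    (ha : ∀ r r', a (Ideal.Quotient.mk _ r, Ideal.Quotient.mk _ r') =
      -Ideal.Quotient.mk _ r + Ideal.Quotient.mk _ (φ (f m) * r'))
    {h : (R ⧸ span {φ (∏ l ∈ range j, f l)}) →ₗ[R] R ⧸ span {φ (∏ l ∈ range (m + 1), f l)}}
    (hg : ∀ r, h (Ideal.Quotient.mk _ r) = Ideal.Quotient.mk _ (r * φ g)) :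
    ∃ ψ : (R ⧸ span {φ (∏ l ∈ range j, f l)}) →ₗ[R] _, a ∘ₗ ψ = h := by
  obtain ⟨c₁, c₂, h₁, h₂, h₃⟩ := hfg
  exact exists_comp_eq_of_dvd a ha hg (by simpa only [map_mul] using map_dvd φ h₁)
    (by simpa only [map_mul] using map_dvd φ h₂)
    (by simpa only [map_sub, map_mul] using map_dvd φ h₃)

end Products

lemma MvPowerSeries.mem_span_X_X_of_constantCoeff_eq_zero {R : Type*} [CommRing R]
    {φ : MvPowerSeries (Fin 2) R} (h : constantCoeff φ = 0) : φ ∈ span {X 0, X 1} := by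
  classical
  -- the part of `φ` not involving `X 0`
  set ψ : MvPowerSeries (Fin 2) R := fun m => if m 0 = 0 then coeff m φ else 0
  have h₀ : X 0 ∣ φ - ψ := by
    rw [X_dvd_iff]
    intro m hm
    rw [map_sub, sub_eq_zero]
    exact (if_pos hm).symm
  have h₁ : X 1 ∣ ψ := by
    rw [X_dvd_iff]
    intro m hm₁
    change (if m 0 = 0 then coeff m φ else 0) = 0
    split_ifs with hm₀
    · obtain rfl : m = 0 := by ext t; fin_cases t <;> assumption
      rwa [coeff_zero_eq_constantCoeff_apply]
    · rfl
  obtain ⟨u, hu⟩ := h₀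
  obtain ⟨v, hv⟩ := h₁
  exact mem_span_pair.mpr ⟨u, v, by linear_combination -hu - hv⟩

theorem statement5_general (k : Type) [Field k]
    (n : ℕ) (f : ℕ → PSring k)
    (hirr : ∀ i < n, Irreducible (f i))
    (i : ℕ) (hi1 : 1 ≤ i) (hi2 : i < n)
    (hmax : (Ideal.span {f (i - 1), f i} : Ideal (PSring k)) = mxy k) :
    ∀ a : Smod k n f (i + 1) × Smod k n f (i - 1) →ₗ[Rring k n f] Smod k n f i,
      (∀ r r' : Rring k n f,
        a (qmk k n f (∏ j ∈ Finset.range (i + 1), f j) r,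
           qmk k n f (∏ j ∈ Finset.range (i - 1), f j) r') =
          - qmk k n f (∏ j ∈ Finset.range i, f j) r +
          qmk k n f (∏ j ∈ Finset.range i, f j) (toR k n f (f (i - 1)) * r')) →
      ∀ jdx : ℕ, 1 ≤ jdx → jdx ≤ n →
        ∀ h : Smod k n f jdx →ₗ[Rring k n f] Smod k n f i,
          (¬ ∃ σ : Smod k n f i →ₗ[Rring k n f] Smod k n f jdx,
              h ∘ₗ σ = LinearMap.id) →
          ∃ g : Smod k n f jdx →ₗ[Rring k n f]
              Smod k n f (i + 1) × Smod k n f (i - 1),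
            a ∘ₗ g = h := by
  intro a ha j _ hjn h hns
  obtain ⟨m, rfl⟩ : ∃ m, i = m + 1 := ⟨i - 1, by omega⟩
  obtain ⟨g, hg⟩ := h.exists_map_mk_eq_mk_mul
  obtain ⟨g, rfl⟩ := Ideal.Quotient.mk_surjective g
  have hdvd : ∏ l ∈ range (m + 1), f l ∣ (∏ l ∈ range j, f l) * g := by
    refine dvd_of_mk_dvd_mk (prod_dvd_prod_of_subset _ _ f (range_mono hi2.le)) ?_
    simpa only [map_mul] using dvd_mul_of_map_mk_eq_mk_mul hg
  have hfac : MulFactorsThrough f m j g := by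
    rcases lt_trichotomy j (m + 1) with hlt | rfl | hgt
    · refine mulFactorsThrough_of_le (by omega) ?_ hdvd
      exact prod_ne_zero_iff.mpr fun l hl => (hirr l ((mem_range.mp hl).trans_le hjn)).ne_zero
    · refine mulFactorsThrough_of_mem_span_pair ?_
      rw [show span {f m, f (m + 1)} = mxy k from hmax]
      refine MvPowerSeries.mem_span_X_X_of_constantCoeff_eq_zero ?_
      by_contra hc
      exact hns (exists_comp_eq_id_of_isUnit hg
        ((MvPowerSeries.isUnit_iff_constantCoeff.mpr (isUnit_iff_ne_zero.mpr hc)).map _))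
    · exact mulFactorsThrough_of_lt g hgt
  exact exists_comp_eq_of_mulFactorsThrough (toR k n f) hfac a ha hg

theorem statement5 (k : Type) [Field k] [Infinite k]
    (n : ℕ) (hn : 1 ≤ n) (f : ℕ → PSring k)
    (hmem : ∀ i < n, f i ∈ mxy k)
    (hirr : ∀ i < n, Irreducible (f i))
    (hdist : ∀ i < n, ∀ j < n, i ≠ j →
      (Ideal.span {f i} : Ideal (PSring k)) ≠ Ideal.span {f j})
    (i : ℕ) (hi1 : 1 ≤ i) (hi2 : i < n)
    (hmax : (Ideal.span {f (i - 1), f i} : Ideal (PSring k)) = mxy k) :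
    ∀ a : Smod k n f (i + 1) × Smod k n f (i - 1) →ₗ[Rring k n f] Smod k n f i,
      (∀ r r' : Rring k n f,
        a (qmk k n f (∏ j ∈ Finset.range (i + 1), f j) r,
           qmk k n f (∏ j ∈ Finset.range (i - 1), f j) r') =
          - qmk k n f (∏ j ∈ Finset.range i, f j) r +
          qmk k n f (∏ j ∈ Finset.range i, f j) (toR k n f (f (i - 1)) * r')) →
      ∀ jdx : ℕ, 1 ≤ jdx → jdx ≤ n →
        ∀ h : Smod k n f jdx →ₗ[Rring k n f] Smod k n f i,
          (¬ ∃ σ : Smod k n f i →ₗ[Rring k n f] Smod k n f jdx,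
              h ∘ₗ σ = LinearMap.id) →
          ∃ g : Smod k n f jdx →ₗ[Rring k n f]
              Smod k n f (i + 1) × Smod k n f (i - 1),
            a ∘ₗ g = h :=
  statement5_general k n f hirr i hi1 hi2 hmax
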